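/- Let p be a prime and let F be a closed subset of ℤ_p whose topological boundary ∂F satisfies μ_p(∂F) = 0. Then the upper Banach density of F ∩ ℤ equals the Haar measure of F: d*(F ∩ ℤ) = μ_p(F). -/

import Mathlib

open MeasureTheory Filter Set Metric
open scoped ENNReal NNReal

noncomputable section

/-- Number of elements of `E` in the integer interval `(M, M+n]`. -/
def cnt (E : Set ℤ) (M : ℤ) (n : ℕ) : ℕ := (E ∩ Set.Ioc M (M + n)).ncard

/-- The `s`-counting measure `ℋ_s(E) = limsup_{|I|→∞} |E ∩ I| / |I|^s`,
where `I` ranges over integer intervals `(M, N]`. -/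
def countingMeasure (s : ℝ) (E : Set ℤ) : ℝ≥0∞ :=
  Filter.atTop.limsup fun n : ℕ => ⨆ M : ℤ, (cnt E M n : ℝ≥0∞) / (n : ℝ≥0∞) ^ s

/-- The upper Banach density `d*(E) = limsup_{|I|→∞} |E ∩ I| / |I|`. -/
def upperBanachDensity (E : Set ℤ) : ℝ≥0∞ := countingMeasure 1 E

variable (p : ℕ) [Fact p.Prime]

instance : MeasurableSpace ℤ_[p] := borel ℤ_[p]
instance : BorelSpace ℤ_[p] := ⟨rfl⟩

/-- Projection `Π_p(F) = F ∩ ℤ` of a set `F ⊆ ℤ_p`, as a set of integers. -/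
def proj (F : Set ℤ_[p]) : Set ℤ := {m : ℤ | (m : ℤ_[p]) ∈ F}

/-- The closed ball of radius `p^{-n}` around `x` in `ℤ_p`. -/
def pball (x : ℤ_[p]) (n : ℕ) : Set ℤ_[p] := Metric.closedBall x ((p : ℝ) ^ (-(n : ℤ)))

/-- `limsup_{|I|→∞} |A ∩ B ∩ I| / |B ∩ I|^s` for sets of integers `A, B`. -/
def relCount (s : ℝ) (A B : Set ℤ) : ℝ≥0∞ :=
  Filter.atTop.limsup fun n : ℕ => ⨆ M : ℤ, (cnt (A ∩ B) M n : ℝ≥0∞) / (cnt B M n : ℝ≥0∞) ^ s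

/-- `η_s(F; x, n) = limsup_{|I|→∞} |F ∩ B_{p^{-n}}(x) ∩ I| / |B_{p^{-n}}(x) ∩ I|^s`. -/
def etaN (s : ℝ) (F : Set ℤ_[p]) (x : ℤ_[p]) (n : ℕ) : ℝ≥0∞ :=
  relCount s (proj p F) (proj p (pball p x n))

/-- The `s`-counting local measure `η_s(F; x) = limsup_{n→∞} η_s(F; x, n)`. -/
def eta (s : ℝ) (F : Set ℤ_[p]) (x : ℤ_[p]) : ℝ≥0∞ :=
  Filter.atTop.limsup fun n : ℕ => etaN p s F x n

/-- `N_{p^{-n}}(F)`: minimal number of closed balls of radius `p^{-n}` covering `F`. -/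
def coverNumber (F : Set ℤ_[p]) (n : ℕ) : ℕ :=
  sInf {k : ℕ | ∃ t : Finset ℤ_[p], t.card = k ∧
    F ⊆ ⋃ x ∈ t, Metric.closedBall x ((p : ℝ) ^ (-(n : ℤ)))}

/-- Upper box-counting dimension of `F ⊆ ℤ_p`. -/
def upperBoxDim (F : Set ℤ_[p]) : ℝ :=
  Filter.atTop.limsup fun n : ℕ => Real.log (coverNumber p F n) / (n * Real.log p)

/-- Lower box-counting dimension of `F ⊆ ℤ_p`. -/
def lowerBoxDim (F : Set ℤ_[p]) : ℝ :=
  Filter.atTop.liminf fun n : ℕ => Real.log (coverNumber p F n) / (n * Real.log p)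

/-- Maximal number of points of `E` in an integer interval of length `n`. -/
def maxCnt (E : Set ℤ) (n : ℕ) : ℕ := sSup {k : ℕ | ∃ M : ℤ, cnt E M n = k}

/-- The counting dimension `D(E) = limsup_{|I|→∞} log |E ∩ I| / log |I|`. -/
def countingDim (E : Set ℤ) : ℝ :=
  Filter.atTop.limsup fun n : ℕ => Real.log (maxCnt E n) / Real.log n

/-- `θ̲*^s(F) = limsup_n min_{a ∈ G_n} ℋ^s(F ∩ B_{p^{-n}}(a)) / p^{-ns}`, where the
minimum runs over residues `a` whose ball `B_{p^{-n}}(a)` meets `F`. -/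
def thetaStar (s : ℝ) (F : Set ℤ_[p]) : ℝ≥0∞ :=
  Filter.atTop.limsup fun n : ℕ =>
    ⨅ (a : ℤ) (_ : (pball p (a : ℤ_[p]) n ∩ F).Nonempty),
      μH[s] (F ∩ pball p (a : ℤ_[p]) n) / (p : ℝ≥0∞) ^ (-((n : ℝ) * s))

/-- A finite arithmetic progression in `ℤ` with common difference `d`. -/
def IsAPWithDiff (A : Set ℤ) (d : ℤ) : Prop :=
  ∃ a : ℤ, ∃ L : ℕ, A = (fun i : ℕ => a + d * (i : ℤ)) '' {i : ℕ | i < L}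

/-! Reduction modulo `p ^ k` is a continuous homomorphism from `ℤ_[p]` onto the finite group
`ZMod (p ^ k)`, so an invariant probability measure gives each of its fibres mass `p ^ (-k)`,
and the integers lying in a union of fibres form a `p ^ k`-periodic set whose upper Banach density
is the proportion of residues it uses. Hence, for every `k`, `d*(F ∩ ℤ)` lies between the measures
of the union of the fibres contained in `F` and of the union of the fibres meeting `F`. As
`k → ∞` these unions increase to `interior F` and decrease to `closure F`, and both have measure
`μ F` because the frontier of `F` is null. -/

open Topology

section Counting

lemma cnt_mono {E E' : Set ℤ} (h : E ⊆ E') (M : ℤ) (n : ℕ) : cnt E M n ≤ cnt E' M n :=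
  ncard_le_ncard (inter_subset_inter_left _ h) ((finite_Ioc _ _).inter_of_right _)

lemma cnt_le_cnt_of_le (E : Set ℤ) (M : ℤ) {n n' : ℕ} (h : n ≤ n') : cnt E M n ≤ cnt E M n' :=
  ncard_le_ncard (inter_subset_inter_right _ (Ioc_subset_Ioc_right (by omega)))
    ((finite_Ioc _ _).inter_of_right _)

lemma cnt_add (E : Set ℤ) (M : ℤ) (a b : ℕ) :
    cnt E M (a + b) = cnt E M a + cnt E (M + a) b := by
  have hunion : Ioc M (M + a) ∪ Ioc (M + a) (M + a + b) = Ioc M (M + (a + b : ℕ)) := by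
    rw [Ioc_union_Ioc_eq_Ioc (by omega) (by omega)]; push_cast; ring_nf
  rw [cnt, cnt, cnt, ← hunion, inter_union_distrib_left, ncard_union_eq
    ((Ioc_disjoint_Ioc_of_le le_rfl).mono inter_subset_right inter_subset_right)
    ((finite_Ioc _ _).inter_of_right _) ((finite_Ioc _ _).inter_of_right _)]

variable {q : ℕ}

lemma injOn_intCast_Ioc (M : ℤ) : InjOn (Int.cast : ℤ → ZMod q) (Ioc M (M + q)) := by
  intro a ha b hb hab
  have hdvd := (ZMod.intCast_eq_intCast_iff_dvd_sub a b q).mp hab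
  have := Int.eq_zero_of_abs_lt_dvd hdvd (by rw [abs_lt]; simp only [mem_Ioc] at ha hb; omega)
  omega

variable [NeZero q]

lemma intCast_image_Ioc (M : ℤ) : (Int.cast : ℤ → ZMod q) '' Ioc M (M + q) = univ := by
  refine eq_of_subset_of_ncard_le (subset_univ _) ?_ (toFinite _)
  rw [(injOn_intCast_Ioc M).ncard_image, ncard_univ, Nat.card_eq_fintype_card, ZMod.card,
    ← Finset.coe_Ioc, ncard_coe_finset, Int.card_Ioc]
  simp

lemma cnt_intCast_preimage (S : Set (ZMod q)) (M : ℤ) : cnt (Int.cast ⁻¹' S) M q = S.ncard := by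
  rw [cnt, inter_comm, ← ((injOn_intCast_Ioc M).mono inter_subset_left).ncard_image,
    image_inter_preimage, intCast_image_Ioc, univ_inter]

lemma cnt_intCast_preimage_mul (S : Set (ZMod q)) (M : ℤ) (t : ℕ) :
    cnt (Int.cast ⁻¹' S) M (q * t) = S.ncard * t := by
  induction t generalizing M with
  | zero => simp [cnt]
  | succ t ih => rw [mul_add_one, cnt_add, ih, cnt_intCast_preimage, mul_add_one]

lemma cnt_intCast_preimage_le (S : Set (ZMod q)) (M : ℤ) (n : ℕ) :
    cnt (Int.cast ⁻¹' S) M n ≤ S.ncard * (n / q + 1) := by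
  rw [← cnt_intCast_preimage_mul S M]
  exact cnt_le_cnt_of_le _ _ (Nat.lt_mul_div_succ n (NeZero.pos q)).le

end Counting

section UpperBanachDensity

lemma upperBanachDensity_eq_limsup (E : Set ℤ) :
    upperBanachDensity E = atTop.limsup fun n : ℕ => ⨆ M : ℤ, (cnt E M n : ℝ≥0∞) / n := by
  simp only [upperBanachDensity, countingMeasure, ENNReal.rpow_one]

lemma upperBanachDensity_mono {E E' : Set ℤ} (h : E ⊆ E') :
    upperBanachDensity E ≤ upperBanachDensity E' := by
  simp only [upperBanachDensity_eq_limsup]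
  refine limsup_le_limsup (Eventually.of_forall fun n => iSup_mono fun M => ?_)
  gcongr
  exact cnt_mono h M n

variable {q : ℕ} [NeZero q]

lemma upperBanachDensity_intCast_preimage (S : Set (ZMod q)) :
    upperBanachDensity (Int.cast ⁻¹' S) = S.ncard / q := by
  rw [upperBanachDensity_eq_limsup]
  set c : ℝ≥0∞ := (S.ncard : ℝ≥0∞)
  have hq : (q : ℝ≥0∞) ≠ 0 := by simp [NeZero.ne q]
  apply le_antisymm
  · have hbound : ∀ᶠ n : ℕ in atTop,
        ⨆ M : ℤ, (cnt (Int.cast ⁻¹' S) M n : ℝ≥0∞) / n ≤ c / q + c * (n : ℝ≥0∞)⁻¹ := by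
      filter_upwards [eventually_ne_atTop 0] with n hn
      have hdiv : ((n / q : ℕ) : ℝ≥0∞) ≤ n / q := by
        rw [ENNReal.le_div_iff_mul_le (Or.inl hq) (Or.inl (ENNReal.natCast_ne_top q))]
        exact_mod_cast Nat.div_mul_le_self n q
      refine iSup_le fun M => ?_
      calc (cnt (Int.cast ⁻¹' S) M n : ℝ≥0∞) / n ≤ c * ((n / q : ℕ) + 1) / n := by
            gcongr
            simp only [c]
            exact_mod_cast cnt_intCast_preimage_le S M n
        _ ≤ c * ((n : ℝ≥0∞) / q + 1) / n := by gcongr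
        _ = c / q * ((n : ℝ≥0∞) * (n : ℝ≥0∞)⁻¹) + c * (n : ℝ≥0∞)⁻¹ := by
            simp only [div_eq_mul_inv]; ring
        _ = c / q + c * (n : ℝ≥0∞)⁻¹ := by
            rw [ENNReal.mul_inv_cancel (by simpa using hn) (ENNReal.natCast_ne_top n), mul_one]
    have hlim : Tendsto (fun n : ℕ => c / q + c * (n : ℝ≥0∞)⁻¹) atTop (𝓝 (c / q)) := by
      simpa using tendsto_const_nhds.add (ENNReal.Tendsto.const_mul
        ENNReal.tendsto_inv_nat_nhds_zero (Or.inr (ENNReal.natCast_ne_top S.ncard)))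
    exact (limsup_le_limsup hbound).trans hlim.limsup_eq.le
  · refine le_limsup_of_frequently_le' (frequently_atTop.mpr fun m => ⟨q * (m + 1), ?_, ?_⟩)
    · nlinarith [NeZero.pos q]
    · refine le_trans ?_ (le_iSup _ 0)
      rw [cnt_intCast_preimage_mul, Nat.cast_mul, Nat.cast_mul,
        ENNReal.mul_div_mul_right _ _ (by simp) (ENNReal.natCast_ne_top _)]

end UpperBanachDensity

lemma AddMonoidHom.natCard_mul_measure_preimage {G H : Type*} [AddGroup G] [MeasurableSpace G]
    [MeasurableAdd G] [AddGroup H] [Finite H] (f : G →+ H) (hf : Function.Surjective f)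
    (hmeas : ∀ h, MeasurableSet (f ⁻¹' {h})) (μ : Measure G) [μ.IsAddLeftInvariant] (T : Set H) :
    Nat.card H * μ (f ⁻¹' T) = T.ncard * μ univ := by
  have hfiber : ∀ h, μ (f ⁻¹' {h}) = μ f.ker := by
    intro h
    obtain ⟨g, rfl⟩ := hf h
    have : f ⁻¹' {f g} = (-g + ·) ⁻¹' f.ker := by
      ext x
      simp only [mem_preimage, mem_singleton_iff, SetLike.mem_coe, AddMonoidHom.mem_ker, map_add,
        map_neg, neg_add_eq_zero]
      exact eq_comm
    rw [this, measure_preimage_add]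
  have hker : Nat.card H * μ f.ker = μ univ := by
    rw [← f.ker.index_mul_measure (f.coe_ker ▸ hmeas 0) μ, AddSubgroup.index_ker,
      f.range_eq_top.mpr hf, AddSubgroup.card_top]
  rw [← T.toFinite.coe_toFinset, ← sum_measure_preimage_singleton _ fun h _ => hmeas h,
    Finset.sum_congr rfl fun h _ => hfiber h, Finset.sum_const, nsmul_eq_mul, ← hker,
    ncard_coe_finset]
  ring

namespace PadicInt

variable {p}

lemma toZModPow_eq_toZModPow_iff {k : ℕ} {x y : ℤ_[p]} :
    toZModPow k x = toZModPow k y ↔ ‖x - y‖ ≤ (p : ℝ) ^ (-(k : ℤ)) := by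
  rw [← sub_eq_zero, ← map_sub, ← RingHom.mem_ker, ker_toZModPow, norm_le_pow_iff_mem_span_pow]

lemma continuous_toZModPow (k : ℕ) : Continuous (toZModPow k : ℤ_[p] → ZMod (p ^ k)) := by
  refine continuous_discrete_rng.mpr fun r => isOpen_iff_mem_nhds.mpr fun x hx => ?_
  have hp : (0 : ℝ) < p := by exact_mod_cast (Fact.out : p.Prime).pos
  filter_upwards [closedBall_mem_nhds x (zpow_pos hp (-(k : ℤ)))] with y hy
  rw [mem_preimage, mem_singleton_iff, ← mem_singleton_iff.mp hx, toZModPow_eq_toZModPow_iff,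
    ← dist_eq_norm]
  exact hy

lemma measurableSet_preimage_toZModPow (k : ℕ) (T : Set (ZMod (p ^ k))) :
    MeasurableSet (toZModPow k ⁻¹' T : Set ℤ_[p]) :=
  ((isClopen_discrete T).preimage (continuous_toZModPow k)).isClosed.measurableSet

lemma measure_preimage_toZModPow (μ : Measure ℤ_[p]) [μ.IsAddLeftInvariant]
    [IsProbabilityMeasure μ] (k : ℕ) (T : Set (ZMod (p ^ k))) :
    μ (toZModPow k ⁻¹' T) = T.ncard / (p ^ k : ℕ) := by
  have h := (toZModPow k : ℤ_[p] →+* ZMod (p ^ k)).toAddMonoidHom.natCard_mul_measure_preimage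
    (ZMod.ringHom_surjective _) (fun r => measurableSet_preimage_toZModPow k {r}) μ T
  rw [measure_univ, mul_one, Nat.card_zmod] at h
  rw [ENNReal.eq_div_iff (by simp [(Fact.out : p.Prime).ne_zero]) (ENNReal.natCast_ne_top _)]
  exact h

lemma antitone_preimage_toZModPow_image (A : Set ℤ_[p]) :
    Antitone fun k => (toZModPow k ⁻¹' (toZModPow k '' A) : Set ℤ_[p]) := by
  rintro k l hkl x ⟨y, hy, hyx⟩
  exact ⟨y, hy, by rw [← cast_toZModPow k l hkl, hyx, cast_toZModPow k l hkl]⟩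

lemma iInter_preimage_toZModPow_image (A : Set ℤ_[p]) :
    ⋂ k, toZModPow k ⁻¹' (toZModPow k '' A) = closure A := by
  ext x
  simp only [mem_iInter, mem_preimage, mem_image, Metric.mem_closure_iff,
    toZModPow_eq_toZModPow_iff, ← dist_eq_norm]
  constructor
  · intro h ε hε
    obtain ⟨k, hk⟩ := exists_pow_neg_lt p hε
    obtain ⟨y, hy, hyx⟩ := h k
    exact ⟨y, hy, (dist_comm x y ▸ hyx).trans_lt hk⟩
  · intro h k
    have hp : (0 : ℝ) < p := by exact_mod_cast (Fact.out : p.Prime).pos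
    obtain ⟨y, hy, hxy⟩ := h _ (zpow_pos hp (-(k : ℤ)))
    exact ⟨y, hy, (dist_comm y x ▸ hxy).le⟩

lemma tendsto_measure_preimage_toZModPow_image (μ : Measure ℤ_[p]) [IsFiniteMeasure μ]
    (A : Set ℤ_[p]) :
    Tendsto (fun k => μ (toZModPow k ⁻¹' (toZModPow k '' A))) atTop (𝓝 (μ (closure A))) := by
  rw [← iInter_preimage_toZModPow_image]
  exact tendsto_measure_iInter_atTop
    (fun k => (measurableSet_preimage_toZModPow k _).nullMeasurableSet)
    (antitone_preimage_toZModPow_image A) ⟨0, measure_ne_top μ _⟩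

lemma tendsto_measure_preimage_toZModPow_compl_image_compl (μ : Measure ℤ_[p]) (A : Set ℤ_[p]) :
    Tendsto (fun k => μ (toZModPow k ⁻¹' (toZModPow k '' Aᶜ)ᶜ)) atTop (𝓝 (μ (interior A))) := by
  have h : ⋃ k, toZModPow k ⁻¹' (toZModPow k '' Aᶜ)ᶜ = interior A := by
    simp only [preimage_compl, ← compl_iInter, iInter_preimage_toZModPow_image, closure_compl,
      compl_compl]
  rw [← h]
  exact tendsto_measure_iUnion_atTop fun k l hkl =>
    compl_subset_compl.mpr (antitone_preimage_toZModPow_image Aᶜ hkl)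

lemma proj_preimage_toZModPow (k : ℕ) (T : Set (ZMod (p ^ k))) :
    proj p (toZModPow k ⁻¹' T) = Int.cast ⁻¹' T := by
  ext m
  simp [proj]

lemma upperBanachDensity_proj_preimage_toZModPow (μ : Measure ℤ_[p]) [μ.IsAddLeftInvariant]
    [IsProbabilityMeasure μ] (k : ℕ) (T : Set (ZMod (p ^ k))) :
    upperBanachDensity (proj p (toZModPow k ⁻¹' T)) = μ (toZModPow k ⁻¹' T) := by
  rw [proj_preimage_toZModPow, upperBanachDensity_intCast_preimage, measure_preimage_toZModPow]

end PadicInt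

open PadicInt

theorem banachDensity_eq_haar (F : Set ℤ_[p])
    (μ : Measure ℤ_[p]) [μ.IsAddHaarMeasure] [IsProbabilityMeasure μ]
    (hb : μ (frontier F) = 0) :
    upperBanachDensity (proj p F) = μ F := by
  have upper (k : ℕ) : upperBanachDensity (proj p F) ≤ μ (toZModPow k ⁻¹' (toZModPow k '' F)) :=
    upperBanachDensity_proj_preimage_toZModPow μ k _ ▸
      upperBanachDensity_mono fun m hm => subset_preimage_image _ F hm
  have lower (k : ℕ) : μ (toZModPow k ⁻¹' (toZModPow k '' Fᶜ)ᶜ) ≤ upperBanachDensity (proj p F) :=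
    upperBanachDensity_proj_preimage_toZModPow μ k _ ▸
      upperBanachDensity_mono fun m hm => not_not.mp fun hmF => hm ⟨_, hmF, rfl⟩
  apply le_antisymm
  · rw [← measure_closure_of_null_frontier hb]
    exact ge_of_tendsto' (tendsto_measure_preimage_toZModPow_image μ F) upper
  · rw [← measure_interior_of_null_frontier hb]
    exact le_of_tendsto' (tendsto_measure_preimage_toZModPow_compl_image_compl μ F) lower

end
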